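/- Let r ≥ 1, m ≥ 3, and n ≥ max(r,2) be integers, and let 1 ≤ i ≤ n−1. Then there exist n-tuples α(1),...,α(m) of real numbers, where α(1) is weakly decreasing with α_i(1) = α_{i+1}(1) and α_j(1) > α_{j+1}(1) for all j ≠ i, and α(2),...,α(m) are strictly decreasing, such that Σ_{s=1}^m Σ_{i'∈I(s)} α_{i'}(s) > 0 for every 1 ≤ t ≤ n and every (I(1),...,I(m)) ∈ R^n_t(m), and Σ_{s=1}^m Σ_{p∈P(s)} α_{n+1−p}(s) < 0 for every 1 ≤ t ≤ n−r and every (P(1),...,P(m)) ∈ R^{n−r}_t(m). -/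

import Mathlib

open MvPolynomial

/-- Complete homogeneous symmetric polynomial of degree `d` in `t` variables. -/
noncomputable def completeHom (t d : ℕ) : MvPolynomial (Fin t) ℤ :=
  ∑ μ ∈ (Finset.univ : Finset (Fin t)).sym d, ((μ : Multiset (Fin t)).map X).prod

/-- `h_d` for integer `d`, zero for negative `d`. -/
noncomputable def completeHomZ (t : ℕ) (d : ℤ) : MvPolynomial (Fin t) ℤ :=
  if 0 ≤ d then completeHom t d.toNat else 0

/-- The Schur polynomial `s_{λ(I)} = det (h_{a_i - j})` in `t` variables, for a subset
`I ⊆ {0,…,n-1}` identified with the subset `{a+1 | a ∈ I}` of `[n] = {1,…,n}`. -/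
noncomputable def schurOfSet (n t : ℕ) (I : Finset (Fin n)) : MvPolynomial (Fin t) ℤ :=
  Matrix.det (Matrix.of fun i j : Fin t =>
    completeHomZ t ((((I.sort (· ≤ ·)).map (fun a => (a : ℕ) + 1)).getD (i : ℕ) 0 : ℤ)
      - ((j : ℕ) + 1)))

/-- The Vandermonde product `∏_{i<j} (x_i - x_j)` in `t` variables. -/
noncomputable def vandProd (t : ℕ) : MvPolynomial (Fin t) ℤ :=
  ∏ p ∈ Finset.univ.filter (fun p : Fin t × Fin t => p.1 < p.2), (X p.1 - X p.2)

/-- The coefficient of the Schur polynomial `s_μ` in the Schur-basis expansion of a symmetric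
polynomial `f` in `t` variables: the coefficient of `x_1^{μ_1+t-1} ⋯ x_t^{μ_t}` in
`f · ∏_{i<j} (x_i - x_j)`. -/
noncomputable def schurCoeff (t : ℕ) (μ : Fin t → ℕ) (f : MvPolynomial (Fin t) ℤ) : ℤ :=
  MvPolynomial.coeff (Finsupp.equivFunOnFinite.symm fun i : Fin t => μ i + (t - 1 - (i : ℕ)))
    (f * vandProd t)

/-- Membership in `R^n_t(m)`: a sequence of cardinality-`t` subsets of `[n]` such that the
coefficient of the rectangular Schur polynomial `s_{((n-t)^t)}` in `s_{λ(I(1))} ⋯ s_{λ(I(m))}`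
equals 1. -/
def memR (n t m : ℕ) (I : Fin m → Finset (Fin n)) : Prop :=
  (∀ s, (I s).card = t) ∧
    schurCoeff t (fun _ => n - t) (∏ s, schurOfSet n t (I s)) = 1

/-- Membership in `S^n_t(m)`: a sequence of cardinality-`t` subsets of `[n]` such that the
coefficient of `s_μ` in `s_{λ(I(1))} ⋯ s_{λ(I(m))}` is nonzero for some partition `μ` with at
most `t` parts, each at most `n - t`. -/
def memS (n t m : ℕ) (I : Fin m → Finset (Fin n)) : Prop :=
  (∀ s, (I s).card = t) ∧
    ∃ μ : Fin t → ℕ, Antitone μ ∧ (∀ i, μ i ≤ n - t) ∧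
      schurCoeff t μ (∏ s, schurOfSet n t (I s)) ≠ 0

/-- Condition `(⊳_n)` on `n`-tuples `α(1),…,α(m)` (0-indexed: `α s i` is `α_{i+1}(s)`). -/
def CondMajor (n m : ℕ) (α : Fin m → Fin n → ℝ) : Prop :=
  ∀ t : ℕ, 1 ≤ t → t ≤ n → ∀ I : Fin m → Finset (Fin n), memR n t m I →
    0 ≤ ∑ s, ∑ i ∈ I s, α s i

/-- Condition `(⊲_{n,r})`: for `p ∈ P(s) ⊆ [n-r]`, the term is `α_{n+1-p}(s)`. -/
def CondRank (n r m : ℕ) (α : Fin m → Fin n → ℝ) : Prop :=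
  ∀ t : ℕ, 1 ≤ t → t ≤ n - r → ∀ P : Fin m → Finset (Fin (n - r)), memR (n - r) t m P →
    ∑ s, ∑ q ∈ P s, α s ((Fin.castLE (Nat.sub_le n r)) q).rev ≤ 0

/-- `A` is Hermitian with eigenvalue multiset `{α_1,…,α_n}`. -/
def HasEigenvalues {n : ℕ} (A : Matrix (Fin n) (Fin n) ℂ) (α : Fin n → ℝ) : Prop :=
  ∃ hA : A.IsHermitian,
    Multiset.map hA.eigenvalues Finset.univ.val = Multiset.map α Finset.univ.val

/-! A Schur coefficient of a homogeneous polynomial vanishes outside its degree, so membership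
in `R^n_t(m)` forces `∑_s |λ(I(s))| = t(n-t)`, i.e. `∑_s ∑_{a ∈ I(s)} a = t(n-t) + m t(t+1)/2`.
For the tuples `α_j(s) = -j + [s = 1](C + [j > i])` both families of sums are therefore pinned
down up to an error in `[0, t]`, and one level `C` makes all of them strict. -/

namespace MvPolynomial

variable {σ R : Type*} [CommSemiring R]

theorem isHomogeneous_multiset_prod_X (s : Multiset σ) :
    ((s.map X).prod : MvPolynomial σ R).IsHomogeneous (Multiset.card s) := by
  induction s using Multiset.induction with
  | empty => simpa using isHomogeneous_one σ R
  | cons a s ih =>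
    rw [Multiset.map_cons, Multiset.prod_cons, Multiset.card_cons, add_comm]
    exact (isHomogeneous_X R a).mul ih

end MvPolynomial

theorem List.sum_getD_fin {M : Type*} [AddCommMonoid M] (l : List M) (d : M) {t : ℕ}
    (h : l.length = t) : ∑ k : Fin t, l.getD k d = l.sum := by
  subst h
  rw [← List.sum_ofFn]
  congr
  ext k
  simp

theorem Finset.sum_map_sort {α M : Type*} [LinearOrder α] [AddCommMonoid M] (s : Finset α)
    (f : α → M) : ((s.sort (· ≤ ·)).map f).sum = ∑ a ∈ s, f a := by
  rw [Finset.sum_eq_multiset_sum, ← Finset.sort_eq s (· ≤ ·), Multiset.map_coe, Multiset.sum_coe]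

theorem isHomogeneous_completeHom (t d : ℕ) : (completeHom t d).IsHomogeneous d :=
  IsHomogeneous.sum _ _ _ fun μ _ => by
    simpa [μ.2] using isHomogeneous_multiset_prod_X (R := ℤ) (μ : Multiset (Fin t))

theorem completeHomZ_of_neg (t : ℕ) {d : ℤ} (hd : d < 0) : completeHomZ t d = 0 :=
  if_neg hd.not_ge

section ProdCompleteHomZ

variable {ι : Type*} (t : ℕ) (s : Finset ι) (d : ι → ℤ)

theorem prod_completeHomZ_eq_zero_of_sum_neg (h : ∑ k ∈ s, d k < 0) :
    ∏ k ∈ s, completeHomZ t (d k) = 0 := by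
  obtain ⟨k, hk, hneg⟩ := Finset.exists_lt_of_sum_lt (f := d) (g := 0) (by simpa using h)
  exact Finset.prod_eq_zero hk (completeHomZ_of_neg t hneg)

theorem isHomogeneous_prod_completeHomZ :
    (∏ k ∈ s, completeHomZ t (d k)).IsHomogeneous (∑ k ∈ s, d k).toNat := by
  by_cases hd : ∀ k ∈ s, 0 ≤ d k
  · have hdeg : (∑ k ∈ s, d k).toNat = ∑ k ∈ s, (d k).toNat := by
      rw [← Int.ofNat_inj, Int.toNat_of_nonneg (Finset.sum_nonneg hd), Nat.cast_sum]
      exact Finset.sum_congr rfl fun k hk => (Int.toNat_of_nonneg (hd k hk)).symm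
    rw [hdeg]
    refine IsHomogeneous.prod _ _ _ fun k _ => ?_
    rw [completeHomZ, if_pos (hd k ‹_›)]
    exact isHomogeneous_completeHom t _
  · push Not at hd
    obtain ⟨k, hk, hneg⟩ := hd
    rw [Finset.prod_eq_zero hk (completeHomZ_of_neg t hneg)]
    exact isHomogeneous_zero _ _ _

end ProdCompleteHomZ

section DetCompleteHomZ

variable {ι : Type*} [Fintype ι] (t : ℕ) (a b : ι → ℤ)

theorem sum_perm_sub (σ : Equiv.Perm ι) : ∑ k, (a (σ k) - b k) = ∑ i, a i - ∑ j, b j := by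
  rw [Finset.sum_sub_distrib, Equiv.sum_comp σ a]

variable [DecidableEq ι]

theorem det_completeHomZ_eq_sum :
    (Matrix.of fun i j => completeHomZ t (a i - b j)).det =
      ∑ σ : Equiv.Perm ι, Equiv.Perm.sign σ • ∏ k, completeHomZ t (a (σ k) - b k) :=
  Matrix.det_apply _

theorem det_completeHomZ_eq_zero (h : ∑ i, a i < ∑ j, b j) :
    (Matrix.of fun i j => completeHomZ t (a i - b j)).det = 0 := by
  rw [det_completeHomZ_eq_sum]
  refine Finset.sum_eq_zero fun σ _ => ?_
  rw [prod_completeHomZ_eq_zero_of_sum_neg _ _ _ (by rw [sum_perm_sub]; omega), smul_zero]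

theorem isHomogeneous_det_completeHomZ :
    (Matrix.of fun i j => completeHomZ t (a i - b j)).det.IsHomogeneous
      (∑ i, a i - ∑ j, b j).toNat := by
  rw [det_completeHomZ_eq_sum]
  refine IsHomogeneous.sum _ _ _ fun σ _ => ?_
  rw [← sum_perm_sub a b σ, Units.smul_def, zsmul_eq_mul]
  simpa using (isHomogeneous_C _ _).mul
    (isHomogeneous_prod_completeHomZ t Finset.univ fun k => a (σ k) - b k)

end DetCompleteHomZ

section Schur

variable {n t : ℕ} {I : Finset (Fin n)}

theorem sum_schurOfSet_rows (hI : I.card = t) :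
    ∑ k : Fin t, ((((I.sort (· ≤ ·)).map (fun a => (a : ℕ) + 1)).getD (k : ℕ) 0 : ℕ) : ℤ) =
      ∑ a ∈ I, ((a : ℤ) + 1) := by
  have hmap : (I.sort (· ≤ ·)).map (fun a => (a : ℕ) + 1) =
      List.map (fun a : Fin n => (a : ℕ) + 1) (I.sort (· ≤ ·)) :=
    (congrArg _ (List.flatMap_pure_eq_map Fin.val _)).trans (List.map_map ..)
  rw [hmap, ← Nat.cast_sum, List.sum_getD_fin _ _ (by simp [hI]), Finset.sum_map_sort]
  push_cast
  rfl

theorem schurOfSet_eq_zero (hI : I.card = t)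
    (h : ∑ a ∈ I, ((a : ℤ) + 1) < ∑ k : Fin t, ((k : ℤ) + 1)) : schurOfSet n t I = 0 :=
  det_completeHomZ_eq_zero t _ _ (by rwa [sum_schurOfSet_rows hI])

theorem isHomogeneous_schurOfSet (hI : I.card = t) :
    (schurOfSet n t I).IsHomogeneous
      (∑ a ∈ I, ((a : ℤ) + 1) - ∑ k : Fin t, ((k : ℤ) + 1)).toNat := by
  rw [← sum_schurOfSet_rows hI]
  exact isHomogeneous_det_completeHomZ t _ _

end Schur

theorem card_filter_fst_lt_snd (t : ℕ) :
    (Finset.univ.filter fun p : Fin t × Fin t => p.1 < p.2).card = ∑ k : Fin t, (t - 1 - k) := by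
  rw [Finset.card_filter, Fintype.sum_prod_type]
  refine Finset.sum_congr rfl fun k _ => ?_
  rw [Finset.sum_boole, Nat.cast_id, Finset.filter_lt_eq_Ioi, Fin.card_Ioi]

theorem isHomogeneous_vandProd (t : ℕ) :
    (vandProd t).IsHomogeneous (∑ k : Fin t, (t - 1 - k)) := by
  rw [← card_filter_fst_lt_snd, Finset.card_eq_sum_ones]
  exact IsHomogeneous.prod _ _ _ fun p _ => (isHomogeneous_X ℤ p.1).sub (isHomogeneous_X ℤ p.2)

theorem schurCoeff_eq_zero_of_isHomogeneous {t d : ℕ} {μ : Fin t → ℕ}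
    {f : MvPolynomial (Fin t) ℤ} (hf : f.IsHomogeneous d) (hd : d ≠ ∑ k, μ k) :
    schurCoeff t μ f = 0 := by
  refine (hf.mul (isHomogeneous_vandProd t)).coeff_eq_zero ?_
  rw [Finsupp.degree_eq_sum]
  simp only [Finsupp.coe_equivFunOnFinite_symm, Finset.sum_add_distrib]
  omega

theorem sum_sizes_eq_of_schurCoeff_ne_zero {n t m : ℕ} {μ : Fin t → ℕ}
    {I : Fin m → Finset (Fin n)} (hI : ∀ s, (I s).card = t)
    (h : schurCoeff t μ (∏ s, schurOfSet n t (I s)) ≠ 0) :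
    ∑ s, (∑ a ∈ I s, ((a : ℤ) + 1) - ∑ k : Fin t, ((k : ℤ) + 1)) = ∑ k, (μ k : ℤ) := by
  set e : Fin m → ℤ := fun s => ∑ a ∈ I s, ((a : ℤ) + 1) - ∑ k : Fin t, ((k : ℤ) + 1)
  have he : ∀ s, 0 ≤ e s := fun s => by
    by_contra hs
    refine h ?_
    rw [Finset.prod_eq_zero (Finset.mem_univ s) (schurOfSet_eq_zero (hI s) (by linarith)),
      schurCoeff, zero_mul, coeff_zero]
  have hdeg : ∑ s, (e s).toNat = ∑ k, μ k := by
    by_contra hne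
    exact h (schurCoeff_eq_zero_of_isHomogeneous
      (IsHomogeneous.prod _ _ _ fun s _ => isHomogeneous_schurOfSet (hI s)) hne)
  rw [← Nat.cast_sum, ← hdeg, Nat.cast_sum]
  exact Finset.sum_congr rfl fun s _ => (Int.toNat_of_nonneg (he s)).symm

theorem sum_fin_val_add_one (t : ℕ) : ∑ k : Fin t, ((k : ℝ) + 1) = t * (t + 1) / 2 := by
  induction t with
  | zero => simp
  | succ t ih =>
    rw [Fin.sum_univ_castSucc]
    simp only [Fin.val_castSucc, Fin.val_last, ih]
    push_cast
    ring

theorem sum_add_one_of_memR {n t m : ℕ} {I : Fin m → Finset (Fin n)} (hI : memR n t m I)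
    (ht : t ≤ n) :
    ∑ s, ∑ a ∈ I s, ((a : ℝ) + 1) = t * (n - t) + m * (t * (t + 1) / 2) := by
  have h := sum_sizes_eq_of_schurCoeff_ne_zero hI.1 (hI.2 ▸ one_ne_zero)
  rw [Finset.sum_const, Finset.card_univ, Fintype.card_fin, nsmul_eq_mul] at h
  have hR : ∑ s, (∑ a ∈ I s, ((a : ℝ) + 1) - ∑ k : Fin t, ((k : ℝ) + 1)) = t * (n - t) := by
    rw [← Nat.cast_sub ht]
    exact_mod_cast h
  rw [Finset.sum_sub_distrib, sum_fin_val_add_one, Finset.sum_const, Finset.card_univ,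
    Fintype.card_fin, nsmul_eq_mul] at hR
  linarith

def facetBonus (m i : ℕ) (C : ℝ) (s : Fin m) (j : ℕ) : ℝ :=
  if (s : ℕ) = 0 then C + if i ≤ j then 1 else 0 else 0

def facetTuple {n : ℕ} (m i : ℕ) (C : ℝ) (s : Fin m) (j : Fin n) : ℝ :=
  facetBonus m i C s j - ((j : ℕ) + 1)

-- `(⊳_n)` needs `C > m(n+1)/2` and `(⊲_{n,r})` needs `C < m(n+r+1)/2 - 1` (extreme cases
-- `t = n` and `t = n - r`); for `m ≥ 3, r ≥ 1` this level lies in between.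
noncomputable def facetLevel (m n r : ℕ) : ℝ := m * (n + r + 1) / 2 - 5 / 4

section FacetTuple

variable {n m : ℕ} (i : ℕ) (C : ℝ)

theorem antitone_facetTuple {s : Fin m} (hs : (s : ℕ) = 0) :
    Antitone (facetTuple (n := n) m i C s) := by
  have hg : Antitone fun j : ℕ => C + (if i ≤ j then 1 else 0) - ((j : ℝ) + 1) :=
    antitone_nat_of_succ_le fun j => by
      split_ifs <;> push_cast <;> linarith
  intro j j' hjj
  simpa [facetTuple, facetBonus, hs] using hg (Fin.le_def.mp hjj)

theorem facetTuple_eq_succ {s : Fin m} (hs : (s : ℕ) = 0) (j : Fin n) (h : (j : ℕ) + 1 < n)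
    (hj : (j : ℕ) + 1 = i) : facetTuple m i C s j = facetTuple m i C s ⟨j + 1, h⟩ := by
  simp only [facetTuple, facetBonus, hs, if_true, if_neg (show ¬ i ≤ (j : ℕ) by omega),
    if_pos hj.ge]
  push_cast
  ring

theorem facetTuple_succ_lt {s : Fin m} (hs : (s : ℕ) = 0) (j : Fin n) (h : (j : ℕ) + 1 < n)
    (hj : (j : ℕ) + 1 ≠ i) : facetTuple m i C s ⟨j + 1, h⟩ < facetTuple m i C s j := by
  have hij : (i ≤ (j : ℕ) + 1) ↔ (i ≤ (j : ℕ)) := by omega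
  simp only [facetTuple, facetBonus, hs, if_true, hij]
  push_cast
  linarith

theorem strictAnti_facetTuple {s : Fin m} (hs : (s : ℕ) ≠ 0) :
    StrictAnti (facetTuple (n := n) m i C s) := fun j j' hjj => by
  simp only [facetTuple, facetBonus, if_neg hs]
  have : ((j : ℕ) : ℝ) < (j' : ℕ) := by exact_mod_cast hjj
  linarith

theorem sum_facetBonus_mem_Icc {β : Type*} {t : ℕ} (hm : 0 < m) (J : Fin m → Finset β)
    (g : β → ℕ) (hJ : (J ⟨0, hm⟩).card = t) :
    ∑ s, ∑ j ∈ J s, facetBonus m i C s (g j) ∈ Set.Icc (t * C) (t * C + t) := by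
  have hrow : ∀ s : Fin m, s ≠ ⟨0, hm⟩ → ∑ j ∈ J s, facetBonus m i C s (g j) = 0 :=
    fun s hs => Finset.sum_eq_zero fun j _ => if_neg fun h => hs (Fin.ext h)
  rw [Fintype.sum_eq_single _ hrow]
  simp only [facetBonus, if_true, Finset.sum_add_distrib, Finset.sum_const, hJ, nsmul_eq_mul]
  constructor
  · linarith [Finset.sum_nonneg fun j (_ : j ∈ J ⟨0, hm⟩) =>
      (by split_ifs <;> norm_num : (0 : ℝ) ≤ if i ≤ g j then 1 else 0)]
  · have := Finset.sum_le_card_nsmul (J ⟨0, hm⟩) (fun j => if i ≤ g j then (1 : ℝ) else 0) 1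
      fun j _ => by split_ifs <;> norm_num
    rw [hJ, nsmul_eq_mul, mul_one] at this
    linarith

end FacetTuple

theorem val_rev_castLE_add_one {k n : ℕ} (h : k ≤ n) (q : Fin k) :
    (((Fin.castLE h q).rev : ℕ) : ℝ) + 1 = n - q := by
  rw [Fin.val_rev, Fin.val_castLE, Nat.cast_sub (by omega)]
  push_cast
  ring

section FacetInequalities

variable {n r m t : ℕ}

theorem sum_facetTuple_pos (i : ℕ) (hr : 1 ≤ r) (hm : 3 ≤ m) (ht : 1 ≤ t) (htn : t ≤ n)
    {I : Fin m → Finset (Fin n)} (hI : memR n t m I) :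
    0 < ∑ s, ∑ j ∈ I s, facetTuple m i (facetLevel m n r) s j := by
  have hbonus := (sum_facetBonus_mem_Icc i (facetLevel m n r) (by omega) I (fun j => j)
    (hI.1 _)).1
  have hlevel : (n - t : ℝ) + m * (t + 1) / 2 < facetLevel m n r := by
    have htn' : (t : ℝ) ≤ n := by exact_mod_cast htn
    have hr' : (1 : ℝ) ≤ r := by exact_mod_cast hr
    have hm' : (3 : ℝ) ≤ m := by exact_mod_cast hm
    rw [facetLevel]
    linarith [mul_nonneg (by linarith : (0 : ℝ) ≤ m - 3) (by linarith : (0 : ℝ) ≤ n - t + r)]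
  have ht' : (0 : ℝ) < t := by exact_mod_cast ht
  have hscaled := mul_lt_mul_of_pos_left hlevel ht'
  simp only [facetTuple, Finset.sum_sub_distrib, sum_add_one_of_memR hI htn]
  linarith

theorem sum_facetTuple_rev_neg (i : ℕ) (hrn : r ≤ n) (hm : 3 ≤ m) (ht : 1 ≤ t) (htn : t ≤ n - r)
    {P : Fin m → Finset (Fin (n - r))} (hP : memR (n - r) t m P) :
    ∑ s, ∑ q ∈ P s, facetTuple m i (facetLevel m n r) s (Fin.castLE (Nat.sub_le n r) q).rev
      < 0 := by
  have hbonus := (sum_facetBonus_mem_Icc i (facetLevel m n r) (by omega) P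
    (fun q => (Fin.castLE (Nat.sub_le n r) q).rev) (hP.1 _)).2
  have hrev : ∑ s, ∑ q ∈ P s, ((((Fin.castLE (Nat.sub_le n r) q).rev : ℕ) : ℝ) + 1) =
      m * (t * (n + 1)) - ∑ s, ∑ q ∈ P s, ((q : ℝ) + 1) := by
    have hrow : ∀ s, ∑ q ∈ P s, ((((Fin.castLE (Nat.sub_le n r) q).rev : ℕ) : ℝ) + 1) =
        t * (n + 1) - ∑ q ∈ P s, ((q : ℝ) + 1) := by
      intro s
      rw [← nsmul_eq_mul, ← hP.1 s, ← Finset.sum_const, ← Finset.sum_sub_distrib]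
      exact Finset.sum_congr rfl fun q _ => by rw [val_rev_castLE_add_one]; ring
    simp only [hrow, Finset.sum_sub_distrib, Finset.sum_const, Finset.card_univ,
      Fintype.card_fin, nsmul_eq_mul]
  have hlevel : facetLevel m n r + 1 < m * (n + 1) - ((n - r : ℕ) - t) - m * (t + 1) / 2 := by
    have htn' : (t : ℝ) ≤ n - r := by rw [← Nat.cast_sub hrn]; exact_mod_cast htn
    have hm' : (3 : ℝ) ≤ m := by exact_mod_cast hm
    rw [facetLevel, Nat.cast_sub hrn]
    linarith [mul_nonneg (by linarith : (0 : ℝ) ≤ m - 2) (by linarith : (0 : ℝ) ≤ n - r - t)]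
  have ht' : (0 : ℝ) < t := by exact_mod_cast ht
  have hscaled := mul_lt_mul_of_pos_left hlevel ht'
  simp only [facetTuple, Finset.sum_sub_distrib, hrev, sum_add_one_of_memR hP htn]
  linarith

end FacetInequalities

/-- `α s j` is `α_{j+1}(s+1)`, so the tie `α_i(1) = α_{i+1}(1)` is between the 0-based positions
`i - 1` and `i`. -/
theorem exists_tuples_trace_facet (n r m i : ℕ)
    (hr : 1 ≤ r) (hm : 3 ≤ m) (hrn : r ≤ n) (hi : 1 ≤ i) :
    ∃ α : Fin m → Fin n → ℝ,
      Antitone (α ⟨0, by omega⟩) ∧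
      (∀ j : Fin n, ∀ h : (j : ℕ) + 1 < n,
        ((j : ℕ) = i - 1 → α ⟨0, by omega⟩ j = α ⟨0, by omega⟩ ⟨(j : ℕ) + 1, h⟩) ∧
        ((j : ℕ) ≠ i - 1 → α ⟨0, by omega⟩ ⟨(j : ℕ) + 1, h⟩ < α ⟨0, by omega⟩ j)) ∧
      (∀ s : Fin m, s ≠ ⟨0, by omega⟩ → StrictAnti (α s)) ∧
      (∀ t : ℕ, 1 ≤ t → t ≤ n → ∀ I : Fin m → Finset (Fin n), memR n t m I →
        0 < ∑ s, ∑ j ∈ I s, α s j) ∧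
      (∀ t : ℕ, 1 ≤ t → t ≤ n - r → ∀ P : Fin m → Finset (Fin (n - r)),
        memR (n - r) t m P →
        ∑ s, ∑ q ∈ P s, α s ((Fin.castLE (Nat.sub_le n r)) q).rev < 0) :=
  ⟨facetTuple m i (facetLevel m n r), antitone_facetTuple i _ rfl,
    fun j h => ⟨fun hj => facetTuple_eq_succ i _ rfl j h (by omega),
      fun hj => facetTuple_succ_lt i _ rfl j h (by omega)⟩,
    fun _ hs => strictAnti_facetTuple i _ fun h => hs (Fin.ext h),
    fun _ ht htn _ hI => sum_facetTuple_pos i hr hm ht htn hI,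
    fun _ ht htn _ hP => sum_facetTuple_rev_neg i hrn hm ht htn hP⟩
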